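/- For all 0 ≤ b < a ≤ 1, the arc length of the arc of 𝒞 from P(a) to P(b) equals twice the area of the circular sector S(a,b): |arc| = 2 · area(S(a,b)). -/

import Mathlib

open MeasureTheory

/-- The point of the quarter of the unit circle in the closed first quadrant
with ordinate `y`. -/
noncomputable def P (y : ℝ) : EuclideanSpace ℝ (Fin 2) := WithLp.toLp 2 ![Real.sqrt (1 - y ^ 2), y]

/-- `t 0 = a > t 1 > ⋯ > t n = b` is a strictly decreasing finite sequence (a partition
of the arc of the quarter circle from `P a` to `P b`). -/
def IsPartition (a b : ℝ) (n : ℕ) (t : ℕ → ℝ) : Prop :=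
  0 < n ∧ t 0 = a ∧ t n = b ∧ ∀ i < n, t (i + 1) < t i

/-- The polygonal length of the partition `t 0 > t 1 > ⋯ > t n`. -/
noncomputable def polyLength (n : ℕ) (t : ℕ → ℝ) : ℝ :=
  ∑ i ∈ Finset.range n, dist (P (t i)) (P (t (i + 1)))

/-- The arc length of the arc of the quarter circle from `P a` to `P b`: the supremum of
polygonal lengths over all partitions of the arc. -/
noncomputable def arcLength (a b : ℝ) : ℝ :=
  sSup {L | ∃ n t, IsPartition a b n t ∧ L = polyLength n t}

/-- The circular sector determined by `P a` and `P b`. -/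
def sector (a b : ℝ) : Set (EuclideanSpace ℝ (Fin 2)) :=
  {p | ‖p‖ ≤ 1 ∧ b * p 0 ≤ Real.sqrt (1 - b ^ 2) * p 1 ∧ Real.sqrt (1 - a ^ 2) * p 1 ≤ a * p 0}

/-! With `A = arcsin a` and `B = arcsin b`, both sides equal `A - B`. A chord of the unit circle
subtending the angle `δ` has length `2 sin (δ / 2) ≤ δ`, so no polygonal length exceeds `A - B`,
while `n` equal angular steps give `2 n sin ((A - B) / (2 n)) → A - B`. In polar coordinates the
sector becomes `(0, 1] × [B, A]`, of area `∫∫ r dr dθ = (A - B) / 2`. -/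

open Real Set Filter Topology

noncomputable def circlePoint (θ : ℝ) : EuclideanSpace ℝ (Fin 2) :=
  WithLp.toLp 2 ![cos θ, sin θ]

lemma P_eq_circlePoint_arcsin {y : ℝ} (hy : y ∈ Icc (-1) 1) : P y = circlePoint (arcsin y) := by
  simp [P, circlePoint, cos_arcsin, sin_arcsin' hy]

lemma P_sin_eq_circlePoint {θ : ℝ} (hθ : θ ∈ Icc (-(π / 2)) (π / 2)) :
    P (sin θ) = circlePoint θ := by
  rw [P_eq_circlePoint_arcsin (sin_mem_Icc θ), arcsin_sin hθ.1 hθ.2]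

lemma dist_circlePoint (α β : ℝ) :
    dist (circlePoint α) (circlePoint β) = 2 * |sin ((α - β) / 2)| := by
  have hcos : cos (2 * ((α - β) / 2)) = cos α * cos β + sin α * sin β := by
    rw [mul_div_cancel₀ _ two_ne_zero, cos_sub]
  have hsq : (cos α - cos β) ^ 2 + (sin α - sin β) ^ 2 = (2 * sin ((α - β) / 2)) ^ 2 := by
    linear_combination sin_sq_add_cos_sq α + sin_sq_add_cos_sq β + 2 * hcos
      - 4 * sin_sq_eq_half_sub ((α - β) / 2)
  rw [EuclideanSpace.dist_eq, Fin.sum_univ_two]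
  simp [circlePoint, Real.dist_eq, sq_abs, hsq, sqrt_sq_eq_abs, abs_mul]

lemma dist_circlePoint_le (α β : ℝ) : dist (circlePoint α) (circlePoint β) ≤ |α - β| := by
  rw [dist_circlePoint]
  calc 2 * |sin ((α - β) / 2)| ≤ 2 * |(α - β) / 2| :=
        mul_le_mul_of_nonneg_left abs_sin_le_abs zero_le_two
    _ = |α - β| := by rw [abs_div, abs_two]; ring

lemma mul_sinc (x : ℝ) : x * sinc x = sin x := by
  rcases eq_or_ne x 0 with rfl | hx
  · simp
  · rw [sinc_of_ne_zero hx, mul_div_cancel₀ _ hx]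

lemma IsPartition.strictAntiOn {a b : ℝ} {n : ℕ} {t : ℕ → ℝ} (h : IsPartition a b n t) :
    StrictAntiOn t (Iic n) :=
  strictAntiOn_Iic_of_succ_lt fun m hm => by simpa using h.2.2.2 m hm

lemma IsPartition.mem_Icc {a b : ℝ} {n : ℕ} {t : ℕ → ℝ} (h : IsPartition a b n t) {i : ℕ}
    (hi : i ≤ n) : t i ∈ Icc b a :=
  ⟨h.2.2.1 ▸ h.strictAntiOn.antitoneOn hi self_mem_Iic hi,
    h.2.1 ▸ h.strictAntiOn.antitoneOn n.zero_le hi i.zero_le⟩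

lemma polyLength_le_arcsin_sub_arcsin {a b : ℝ} {n : ℕ} {t : ℕ → ℝ} (hb : -1 ≤ b) (ha : a ≤ 1)
    (h : IsPartition a b n t) : polyLength n t ≤ arcsin a - arcsin b := by
  have ht {i : ℕ} (hi : i ≤ n) : t i ∈ Icc (-1) 1 :=
    Icc_subset_Icc hb ha (h.mem_Icc hi)
  have hstep : ∀ i ∈ Finset.range n,
      dist (P (t i)) (P (t (i + 1))) ≤ arcsin (t i) - arcsin (t (i + 1)) := fun i hi => by
    have hi : i < n := Finset.mem_range.1 hi
    rw [P_eq_circlePoint_arcsin (ht hi.le), P_eq_circlePoint_arcsin (ht hi)]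
    refine (dist_circlePoint_le _ _).trans_eq (abs_of_nonneg ?_)
    exact sub_nonneg.2 (arcsin_le_arcsin (h.2.2.2 i hi).le)
  calc polyLength n t ≤ ∑ i ∈ Finset.range n, (arcsin (t i) - arcsin (t (i + 1))) :=
        Finset.sum_le_sum hstep
    _ = arcsin a - arcsin b := by rw [Finset.sum_range_sub', h.2.1, h.2.2.1]

noncomputable def sinPartition (A B : ℝ) (n i : ℕ) : ℝ :=
  sin (A - i * ((A - B) / n))

section sinPartition

variable {A B : ℝ} {n : ℕ}

lemma sub_mul_div_mem_Icc (hBA : B ≤ A) {i : ℕ} (hi : i ≤ n) :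
    A - i * ((A - B) / n) ∈ Icc B A := by
  have hstep : 0 ≤ (A - B) / n := div_nonneg (sub_nonneg.2 hBA) n.cast_nonneg
  have hle : i * ((A - B) / n) ≤ A - B := by
    rcases eq_or_ne n 0 with rfl | hn
    · simpa [Nat.le_zero.1 hi] using hBA
    · calc i * ((A - B) / n) ≤ n * ((A - B) / n) := by gcongr
        _ = A - B := mul_div_cancel₀ _ (Nat.cast_ne_zero.2 hn)
  constructor <;> nlinarith [mul_nonneg i.cast_nonneg hstep]

lemma isPartition_sinPartition (hB : -(π / 2) ≤ B) (hBA : B < A) (hA : A ≤ π / 2) (hn : 0 < n) :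
    IsPartition (sin A) (sin B) n (sinPartition A B n) := by
  have hθ {i : ℕ} (hi : i ≤ n) : A - i * ((A - B) / n) ∈ Icc (-(π / 2)) (π / 2) :=
    Icc_subset_Icc hB hA (sub_mul_div_mem_Icc hBA.le hi)
  refine ⟨hn, by simp [sinPartition], ?_, fun i hi => ?_⟩
  · rw [sinPartition, mul_div_cancel₀ _ (Nat.cast_ne_zero.2 hn.ne'), sub_sub_cancel]
  · refine strictMonoOn_sin (hθ hi) (hθ hi.le) ?_
    push_cast
    nlinarith [div_pos (sub_pos.2 hBA) (Nat.cast_pos.2 hn)]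

lemma polyLength_sinPartition (hB : -(π / 2) ≤ B) (hBA : B ≤ A) (hA : A ≤ π / 2) (hn : n ≠ 0) :
    polyLength n (sinPartition A B n) = (A - B) * |sinc ((A - B) / (2 * n))| := by
  have hθ {i : ℕ} (hi : i ≤ n) : A - i * ((A - B) / n) ∈ Icc (-(π / 2)) (π / 2) :=
    Icc_subset_Icc hB hA (sub_mul_div_mem_Icc hBA hi)
  have hchord : ∀ i ∈ Finset.range n, dist (P (sinPartition A B n i))
      (P (sinPartition A B n (i + 1))) = 2 * |sin ((A - B) / (2 * n))| := fun i hi => by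
    have hi : i < n := Finset.mem_range.1 hi
    rw [sinPartition, sinPartition, P_sin_eq_circlePoint (hθ hi.le),
      P_sin_eq_circlePoint (hθ hi), dist_circlePoint]
    congr 3
    push_cast
    field_simp
    ring
  have hn' : (0 : ℝ) < n := Nat.cast_pos.2 (Nat.pos_of_ne_zero hn)
  rw [polyLength, Finset.sum_congr rfl hchord, Finset.sum_const, Finset.card_range, nsmul_eq_mul,
    ← mul_sinc, abs_mul, abs_of_nonneg (div_nonneg (sub_nonneg.2 hBA) (by positivity))]
  field_simp

lemma tendsto_polyLength_sinPartition (hB : -(π / 2) ≤ B) (hBA : B ≤ A) (hA : A ≤ π / 2) :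
    Tendsto (fun n => polyLength n (sinPartition A B n)) atTop (𝓝 (A - B)) := by
  have hlim : Tendsto (fun n : ℕ => (A - B) * |sinc ((A - B) / 2 / n)|) atTop
      (𝓝 ((A - B) * |sinc 0|)) :=
    ((continuous_abs.comp continuous_sinc).tendsto 0).comp
      (tendsto_const_div_atTop_nhds_zero_nat _) |>.const_mul _
  rw [sinc_zero, abs_one, mul_one] at hlim
  refine hlim.congr' (eventually_atTop.2 ⟨1, fun n hn => ?_⟩)
  dsimp only
  rw [polyLength_sinPartition hB hBA hA (by omega), div_div]

end sinPartition

theorem arcLength_eq_arcsin_sub_arcsin {a b : ℝ} (hb : -1 ≤ b) (hba : b < a) (ha : a ≤ 1) :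
    arcLength a b = arcsin a - arcsin b := by
  have hBA : arcsin b < arcsin a := arcsin_lt_arcsin hb hba ha
  have hupper : ∀ L ∈ {L | ∃ n t, IsPartition a b n t ∧ L = polyLength n t},
      L ≤ arcsin a - arcsin b := by
    rintro _ ⟨n, t, h, rfl⟩
    exact polyLength_le_arcsin_sub_arcsin hb ha h
  have hmem {n : ℕ} (hn : 0 < n) : polyLength n (sinPartition (arcsin a) (arcsin b) n) ∈
      {L | ∃ n t, IsPartition a b n t ∧ L = polyLength n t} := by
    refine ⟨n, _, ?_, rfl⟩
    have := isPartition_sinPartition (neg_pi_div_two_le_arcsin b) hBA (arcsin_le_pi_div_two a) hn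
    rwa [sin_arcsin (by linarith) ha, sin_arcsin hb (by linarith)] at this
  refine le_antisymm (csSup_le ⟨_, hmem one_pos⟩ hupper) (le_of_tendsto
    (tendsto_polyLength_sinPartition (neg_pi_div_two_le_arcsin b) hBA.le (arcsin_le_pi_div_two a))
    (eventually_atTop.2 ⟨1, fun n hn => le_csSup ⟨_, hupper⟩ (hmem hn)⟩))

def diskSector (B A : ℝ) : Set (ℝ × ℝ) :=
  {q | q.1 ^ 2 + q.2 ^ 2 ≤ 1 ∧ sin B * q.1 ≤ cos B * q.2 ∧ cos A * q.2 ≤ sin A * q.1}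

lemma isClosed_diskSector (B A : ℝ) : IsClosed (diskSector B A) := by
  simp only [diskSector, ofPred_and]
  refine (isClosed_le ?_ ?_).inter ((isClosed_le ?_ ?_).inter (isClosed_le ?_ ?_)) <;> fun_prop

lemma nonneg_of_sin_nonneg_of_sin_nonneg {x y : ℝ} (hxy : 0 < x + y) (hy : y < 2 * π)
    (hsx : 0 ≤ sin x) (hsy : 0 ≤ sin y) : 0 ≤ x := by
  by_contra! hx
  -- `sin` is negative on `(-π, 0)`, and on `(π, 2π)`, where `y` lies once `x ≤ -π`
  rcases lt_or_ge (-π) x with hπx | hxπ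
  · exact (sin_neg_of_neg_of_neg_pi_lt hx hπx).not_ge hsx
  · have := sin_pos_of_pos_of_lt_pi (x := y - π) (by linarith) (by linarith)
    rw [sin_sub_pi] at this
    linarith

lemma polarCoord_symm_mem_diskSector_iff {B A r θ : ℝ} (hB : -π ≤ B) (hBA : B < A) (hA : A ≤ π)
    (hAB : A - B ≤ π) (hr : 0 < r) (hθ : θ ∈ Ioo (-π) π) :
    polarCoord.symm (r, θ) ∈ diskSector B A ↔ r ≤ 1 ∧ θ ∈ Icc B A := by
  have hnorm : (r * cos θ) ^ 2 + (r * sin θ) ^ 2 = r ^ 2 := by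
    linear_combination r ^ 2 * sin_sq_add_cos_sq θ
  have hsinB : sin B * (r * cos θ) ≤ cos B * (r * sin θ) ↔ 0 ≤ sin (θ - B) := by
    have : cos B * (r * sin θ) - sin B * (r * cos θ) = r * sin (θ - B) := by rw [sin_sub]; ring
    rw [← sub_nonneg, this, mul_nonneg_iff_of_pos_left hr]
  have hsinA : cos A * (r * sin θ) ≤ sin A * (r * cos θ) ↔ 0 ≤ sin (A - θ) := by
    have : sin A * (r * cos θ) - cos A * (r * sin θ) = r * sin (A - θ) := by rw [sin_sub]; ring
    rw [← sub_nonneg, this, mul_nonneg_iff_of_pos_left hr]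
  simp only [diskSector, polarCoord_symm_apply, mem_ofPred_eq, hnorm, sq_le_one_iff₀ hr.le,
    hsinB, hsinA, mem_Icc]
  constructor
  · rintro ⟨hr1, hθB, hAθ⟩
    refine ⟨hr1, ?_, ?_⟩
    · linarith [nonneg_of_sin_nonneg_of_sin_nonneg (x := θ - B) (y := A - θ)
        (by linarith) (by linarith [hθ.1]) hθB hAθ]
    · linarith [nonneg_of_sin_nonneg_of_sin_nonneg (x := A - θ) (y := θ - B)
        (by linarith) (by linarith [hθ.2]) hAθ hθB]
  · rintro ⟨hr1, hBθ, hθA⟩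
    exact ⟨hr1, sin_nonneg_of_nonneg_of_le_pi (by linarith) (by linarith),
      sin_nonneg_of_nonneg_of_le_pi (by linarith) (by linarith)⟩

lemma volume_real_diskSector {B A : ℝ} (hB : -π < B) (hBA : B < A) (hA : A < π)
    (hAB : A - B ≤ π) : volume.real (diskSector B A) = (A - B) / 2 := by
  have hsub : Ioc (0 : ℝ) 1 ×ˢ Icc B A ⊆ polarCoord.target := fun p ⟨hr, hθ⟩ =>
    ⟨hr.1, by linarith [hθ.1], by linarith [hθ.2]⟩
  have hpolar : EqOn (fun p : ℝ × ℝ => p.1 • (diskSector B A).indicator 1 (polarCoord.symm p))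
      ((Ioc (0 : ℝ) 1 ×ˢ Icc B A).indicator Prod.fst) polarCoord.target := by
    rintro ⟨r, θ⟩ ⟨hr, hθ⟩
    have hmem : polarCoord.symm (r, θ) ∈ diskSector B A ↔ r ≤ 1 ∧ θ ∈ Icc B A :=
      polarCoord_symm_mem_diskSector_iff hB.le hBA hA.le hAB hr hθ
    show r • (diskSector B A).indicator 1 (polarCoord.symm (r, θ)) =
      (Ioc (0 : ℝ) 1 ×ˢ Icc B A).indicator Prod.fst (r, θ)
    by_cases h : r ≤ 1 ∧ θ ∈ Icc B A
    · have hr1 : r ∈ Ioc 0 1 := ⟨hr, h.1⟩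
      rw [indicator_of_mem (hmem.2 h), indicator_of_mem (mk_mem_prod hr1 h.2)]
      simp
    · rw [indicator_of_notMem (mt hmem.1 h), indicator_of_notMem (fun h' => h ⟨h'.1.2, h'.2⟩)]
      simp
  calc volume.real (diskSector B A) = ∫ p, (diskSector B A).indicator 1 p :=
        (integral_indicator_one (isClosed_diskSector B A).measurableSet).symm
    _ = ∫ p in polarCoord.target, p.1 • (diskSector B A).indicator 1 (polarCoord.symm p) :=
        (integral_comp_polarCoord_symm _).symm
    _ = ∫ p in Ioc (0 : ℝ) 1 ×ˢ Icc B A, p.1 := by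
        rw [setIntegral_congr_fun polarCoord.open_target.measurableSet hpolar,
          setIntegral_indicator (measurableSet_Ioc.prod measurableSet_Icc),
          inter_eq_right.2 hsub]
    _ = (∫ r in Ioc (0 : ℝ) 1, r) * ∫ _ in Icc B A, (1 : ℝ) := by
        rw [Measure.volume_eq_prod, ← setIntegral_prod_mul (fun r : ℝ => r) (fun _ : ℝ => (1 : ℝ))]
        simp
    _ = (A - B) / 2 := by
        rw [← intervalIntegral.integral_of_le zero_le_one, integral_id, setIntegral_const,
          volume_real_Icc_of_le hBA.le, smul_eq_mul, mul_one]
        ring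

lemma volume_sector {a b : ℝ} (ha : a ∈ Icc (-1) 1) (hb : b ∈ Icc (-1) 1) :
    volume (sector a b) = volume (diskSector (arcsin b) (arcsin a)) := by
  have hcoord := (volume_preserving_finTwoArrow ℝ).comp (PiLp.volume_preserving_ofLp (Fin 2))
  have hpre : sector a b = (fun p : EuclideanSpace ℝ (Fin 2) => (p 0, p 1)) ⁻¹'
      diskSector (arcsin b) (arcsin a) := by
    ext p
    simp [sector, diskSector, EuclideanSpace.norm_eq, Fin.sum_univ_two, cos_arcsin,
      sin_arcsin' ha, sin_arcsin' hb]
  rw [hpre]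
  exact hcoord.measure_preimage (isClosed_diskSector _ _).measurableSet.nullMeasurableSet

/-- The arc length of the arc from `P a` to `P b` equals twice the area of the circular
sector `S(a,b)`. -/
theorem arcLength_eq_two_mul_sector_area (a b : ℝ) (hb : 0 ≤ b) (hba : b < a) (ha : a ≤ 1) :
    arcLength a b = 2 * (volume (sector a b)).toReal := by
  have hBA : arcsin b < arcsin a := arcsin_lt_arcsin (by linarith) hba ha
  have hB := neg_pi_div_two_le_arcsin b
  have hA := arcsin_le_pi_div_two a
  rw [arcLength_eq_arcsin_sub_arcsin (by linarith) hba ha,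
    volume_sector ⟨by linarith, ha⟩ ⟨by linarith, by linarith⟩, ← measureReal_def,
    volume_real_diskSector (by linarith [pi_pos]) hBA (by linarith [pi_pos]) (by linarith)]
  ring
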